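/- Let N ≥ 1 and let u₁ : ℝ^N → ℂ be integrable with ∫_{ℝ^N}|ŵ₁(ξ)|² dξ < ∞, where ŵ₁(ξ) = ∫_{ℝ^N} u₁(x) e^{-i⟨x,ξ⟩} dx. Set P₁ = ∫_{ℝ^N} u₁(x) dx, û(ξ,t) = (4/π) e^{-t log(1+|ξ|²)/2} sin(πt/4) ŵ₁(ξ), and F₃(ξ,t) = (4/π) P₁ e^{-t log(1+|ξ|²)/2} sin( t √(log(1 + |ξ|²)) ). Then there exist constants C > 0 and η > 0 depending only on N, and T > 0, such that for all t ≥ T: ∫_{|ξ| ≥ 1} |û(ξ,t) - F₃(ξ,t)|² dξ ≤ C ( ∫_{ℝ^N}|ŵ₁(ξ)|² dξ + |P₁|² ) e^{-η t}. -/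

import Mathlib

/-!
On `‖ξ‖ ≥ 1` we have `log (1 + ‖ξ‖²) ≥ log 2`, and both `uhat0` and `F₃` carry the factor
`exp (-t log (1 + ‖ξ‖²) / 2)`, so each of them is already exponentially small there and no
cancellation between them is needed. For `F₃`, whose amplitude `P₁` does not decay in `ξ`, we
split `(1 + ‖ξ‖²)^(-t) ≤ 2^(s - t) (1 + ‖ξ‖²)^(-s)` with `s = (N + 1) / 2`, which keeps an
integrable weight on `ℝ^N`; this is why `T = s`.
-/

open MeasureTheory

/-- Non-normalized Fourier transform `ŵ(ξ) = ∫ u(x) e^{-i⟨x,ξ⟩} dx`. -/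
noncomputable def ft {N : ℕ} (u : EuclideanSpace ℝ (Fin N) → ℂ)
    (ξ : EuclideanSpace ℝ (Fin N)) : ℂ :=
  ∫ x, u x * Complex.exp (-Complex.I * ((inner ℝ x ξ : ℝ) : ℂ))

/-- The explicit Fourier-space solution with zero initial position and
initial velocity `w₁ ξ`. -/
noncomputable def uhat0 {N : ℕ} (w₁ : EuclideanSpace ℝ (Fin N) → ℂ)
    (ξ : EuclideanSpace ℝ (Fin N)) (t : ℝ) : ℂ :=
  ((4 / Real.pi : ℝ) : ℂ) * (Real.exp (-(t * Real.log (1 + ‖ξ‖ ^ 2)) / 2) : ℂ)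
    * (Real.sin (Real.pi * t / 4) : ℂ) * w₁ ξ

/-- The leading profile `F₃`. -/
noncomputable def F₃ {N : ℕ} (P₁ : ℂ) (ξ : EuclideanSpace ℝ (Fin N)) (t : ℝ) : ℂ :=
  ((4 / Real.pi : ℝ) : ℂ) * P₁ * (Real.exp (-(t * Real.log (1 + ‖ξ‖ ^ 2)) / 2) : ℂ)
    * (Real.sin (t * Real.sqrt (Real.log (1 + ‖ξ‖ ^ 2))) : ℂ)

lemma exp_neg_mul_le_of_le {a L s t : ℝ} (ha : a ≤ L) (hst : s ≤ t) :
    Real.exp (-(t * L)) ≤ Real.exp (a * s) * Real.exp (-a * t) * Real.exp (-(s * L)) := by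
  rw [← Real.exp_add, ← Real.exp_add]
  exact Real.exp_le_exp.2 (by nlinarith)

lemma exp_neg_div_two_sq (y : ℝ) : Real.exp (-y / 2) ^ 2 = Real.exp (-y) := by
  rw [← Real.exp_nat_mul]; ring_nf

section Profiles

variable {N : ℕ} (ξ : EuclideanSpace ℝ (Fin N)) (t : ℝ)

lemma norm_uhat0_sq_le (w : EuclideanSpace ℝ (Fin N) → ℂ) :
    ‖uhat0 w ξ t‖ ^ 2 ≤
      (4 / Real.pi) ^ 2 * Real.exp (-(t * Real.log (1 + ‖ξ‖ ^ 2))) * ‖w ξ‖ ^ 2 := by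
  have h4π : 0 ≤ 4 / Real.pi := by positivity
  simp only [uhat0, norm_mul, Complex.norm_real, Real.norm_eq_abs, Real.abs_exp,
    abs_of_nonneg h4π, mul_pow, sq_abs, exp_neg_div_two_sq]
  rw [mul_right_comm _ (_ ^ 2)]
  exact mul_le_of_le_one_right (by positivity) (Real.sin_sq_le_one _)

lemma norm_F₃_sq_le (P : ℂ) :
    ‖F₃ P ξ t‖ ^ 2 ≤
      (4 / Real.pi) ^ 2 * ‖P‖ ^ 2 * Real.exp (-(t * Real.log (1 + ‖ξ‖ ^ 2))) := by
  have h4π : 0 ≤ 4 / Real.pi := by positivity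
  simp only [F₃, norm_mul, Complex.norm_real, Real.norm_eq_abs, Real.abs_exp,
    abs_of_nonneg h4π, mul_pow, sq_abs, exp_neg_div_two_sq]
  exact mul_le_of_le_one_right (by positivity) (Real.sin_sq_le_one _)

end Profiles

lemma norm_uhat0_sub_F₃_sq_le {N : ℕ} (w : EuclideanSpace ℝ (Fin N) → ℂ) (P : ℂ)
    {ξ : EuclideanSpace ℝ (Fin N)} (hξ : 1 ≤ ‖ξ‖) {s t : ℝ} (hs : 0 ≤ s) (hst : s ≤ t) :
    ‖uhat0 w ξ t - F₃ P ξ t‖ ^ 2 ≤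
      Real.exp (Real.log 2 * s) * Real.exp (-Real.log 2 * t) *
        (2 * (4 / Real.pi) ^ 2 * (‖w ξ‖ ^ 2 + ‖P‖ ^ 2 * (1 + ‖ξ‖ ^ 2) ^ (-s))) := by
  set L := Real.log (1 + ‖ξ‖ ^ 2)
  set D := Real.exp (Real.log 2 * s) * Real.exp (-Real.log 2 * t)
  set g := (1 + ‖ξ‖ ^ 2) ^ (-s)
  have hL : Real.log 2 ≤ L := Real.log_le_log two_pos (by nlinarith)
  have hg : Real.exp (-(s * L)) = g := by
    rw [show g = _ from Real.rpow_def_of_pos (by positivity) _, mul_neg, mul_comm]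
  have hg_le_one : g ≤ 1 := Real.rpow_le_one_of_one_le_of_nonpos (by nlinarith) (by linarith)
  have hdecay : Real.exp (-(t * L)) ≤ D * g := hg ▸ exp_neg_mul_le_of_le hL hst
  have hD : 0 ≤ D := by positivity
  have hA : 0 ≤ 2 * (4 / Real.pi) ^ 2 := by positivity
  calc ‖uhat0 w ξ t - F₃ P ξ t‖ ^ 2
      ≤ 2 * (‖uhat0 w ξ t‖ ^ 2 + ‖F₃ P ξ t‖ ^ 2) :=
        (pow_le_pow_left₀ (norm_nonneg _) (norm_sub_le _ _) 2).trans add_sq_le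
    _ ≤ 2 * (4 / Real.pi) ^ 2 * Real.exp (-(t * L)) * (‖w ξ‖ ^ 2 + ‖P‖ ^ 2) := by
      linarith [norm_uhat0_sq_le ξ t w, norm_F₃_sq_le ξ t P]
    _ ≤ 2 * (4 / Real.pi) ^ 2 * (D * g) * (‖w ξ‖ ^ 2 + ‖P‖ ^ 2) := by gcongr
    _ ≤ D * (2 * (4 / Real.pi) ^ 2 * (‖w ξ‖ ^ 2 + ‖P‖ ^ 2 * g)) := by
      have hw_weighted : g * ‖w ξ‖ ^ 2 ≤ ‖w ξ‖ ^ 2 :=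
        mul_le_of_le_one_left (sq_nonneg _) hg_le_one
      nlinarith [mul_le_mul_of_nonneg_left hw_weighted (mul_nonneg hA hD)]

lemma setIntegral_norm_uhat0_sub_F₃_sq_le {N : ℕ} (w : EuclideanSpace ℝ (Fin N) → ℂ) (P : ℂ)
    (hw : Integrable (fun ξ => ‖w ξ‖ ^ 2)) {s t : ℝ} (hs : 0 ≤ s) (hst : s ≤ t)
    (hg : Integrable (fun ξ : EuclideanSpace ℝ (Fin N) => (1 + ‖ξ‖ ^ 2) ^ (-s))) :
    (∫ ξ in {ξ : EuclideanSpace ℝ (Fin N) | 1 ≤ ‖ξ‖}, ‖uhat0 w ξ t - F₃ P ξ t‖ ^ 2) ≤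
      Real.exp (Real.log 2 * s) * Real.exp (-Real.log 2 * t) *
        (2 * (4 / Real.pi) ^ 2 *
          ((∫ ξ, ‖w ξ‖ ^ 2) +
            ‖P‖ ^ 2 * ∫ ξ : EuclideanSpace ℝ (Fin N), (1 + ‖ξ‖ ^ 2) ^ (-s))) := by
  have hbound : Integrable (fun ξ : EuclideanSpace ℝ (Fin N) =>
      Real.exp (Real.log 2 * s) * Real.exp (-Real.log 2 * t) *
        (2 * (4 / Real.pi) ^ 2 * (‖w ξ‖ ^ 2 + ‖P‖ ^ 2 * (1 + ‖ξ‖ ^ 2) ^ (-s)))) :=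
    ((hw.add (hg.const_mul _)).const_mul _).const_mul _
  have hfar : MeasurableSet {ξ : EuclideanSpace ℝ (Fin N) | 1 ≤ ‖ξ‖} :=
    measurableSet_le measurable_const measurable_norm
  calc (∫ ξ in {ξ : EuclideanSpace ℝ (Fin N) | 1 ≤ ‖ξ‖}, ‖uhat0 w ξ t - F₃ P ξ t‖ ^ 2)
      ≤ ∫ ξ in {ξ : EuclideanSpace ℝ (Fin N) | 1 ≤ ‖ξ‖},
          Real.exp (Real.log 2 * s) * Real.exp (-Real.log 2 * t) *
            (2 * (4 / Real.pi) ^ 2 * (‖w ξ‖ ^ 2 + ‖P‖ ^ 2 * (1 + ‖ξ‖ ^ 2) ^ (-s))) :=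
        integral_mono_of_nonneg (ae_of_all _ fun _ => sq_nonneg _) hbound.integrableOn
          (ae_restrict_of_forall_mem hfar fun _ hξ => norm_uhat0_sub_F₃_sq_le w P hξ hs hst)
    _ ≤ ∫ ξ, Real.exp (Real.log 2 * s) * Real.exp (-Real.log 2 * t) *
            (2 * (4 / Real.pi) ^ 2 * (‖w ξ‖ ^ 2 + ‖P‖ ^ 2 * (1 + ‖ξ‖ ^ 2) ^ (-s))) :=
        setIntegral_le_integral hbound (ae_of_all _ fun _ => by positivity)
    _ = _ := by
        rw [integral_const_mul, integral_const_mul, integral_add hw (hg.const_mul _),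
          integral_const_mul]

theorem stmt_16_general (N : ℕ)
    (u₁ : EuclideanSpace ℝ (Fin N) → ℂ)
    (hw₁ : Integrable (fun ξ : EuclideanSpace ℝ (Fin N) => ‖ft u₁ ξ‖ ^ 2)) :
    ∃ C > (0 : ℝ), ∃ η > (0 : ℝ), ∃ T > (0 : ℝ), ∀ t : ℝ, T ≤ t →
      (∫ ξ in {ξ : EuclideanSpace ℝ (Fin N) | 1 ≤ ‖ξ‖},
        ‖uhat0 (ft u₁) ξ t - F₃ (∫ x, u₁ x) ξ t‖ ^ 2)
      ≤ C * ((∫ ξ : EuclideanSpace ℝ (Fin N), ‖ft u₁ ξ‖ ^ 2) + ‖∫ x, u₁ x‖ ^ 2)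
          * Real.exp (-η * t) := by
  set s : ℝ := (N + 1) / 2
  have hs : 0 < s := by positivity
  have hg : Integrable (fun ξ : EuclideanSpace ℝ (Fin N) => (1 + ‖ξ‖ ^ 2) ^ (-s)) := by
    simpa only [s, neg_div] using integrable_rpow_neg_one_add_norm_sq
      (E := EuclideanSpace ℝ (Fin N)) (μ := volume) (r := N + 1) (by simp)
  set K := ∫ ξ : EuclideanSpace ℝ (Fin N), (1 + ‖ξ‖ ^ 2) ^ (-s)
  set S := ∫ ξ : EuclideanSpace ℝ (Fin N), ‖ft u₁ ξ‖ ^ 2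
  have hK : 0 ≤ K := integral_nonneg fun _ => by positivity
  have hS : 0 ≤ S := integral_nonneg fun _ => by positivity
  refine ⟨Real.exp (Real.log 2 * s) * (2 * (4 / Real.pi) ^ 2) * (1 + K), by positivity,
    Real.log 2, Real.log_pos one_lt_two, s, hs, fun t ht => ?_⟩
  refine (setIntegral_norm_uhat0_sub_F₃_sq_le _ _ hw₁ hs.le ht hg).trans ?_
  have hmix : S + ‖∫ x, u₁ x‖ ^ 2 * K ≤ (1 + K) * (S + ‖∫ x, u₁ x‖ ^ 2) := by
    nlinarith [mul_nonneg hK hS]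
  calc _ ≤ Real.exp (Real.log 2 * s) * Real.exp (-Real.log 2 * t) *
          (2 * (4 / Real.pi) ^ 2 * ((1 + K) * (S + ‖∫ x, u₁ x‖ ^ 2))) := by gcongr
    _ = _ := by ring

/-- Theorem 3.4: high-frequency asymptotic profile estimate. -/
theorem stmt_16 (N : ℕ) (hN : 1 ≤ N)
    (u₁ : EuclideanSpace ℝ (Fin N) → ℂ)
    (h₁ : Integrable u₁)
    (hw₁ : Integrable (fun ξ : EuclideanSpace ℝ (Fin N) => ‖ft u₁ ξ‖ ^ 2)) :
    ∃ C > (0 : ℝ), ∃ η > (0 : ℝ), ∃ T > (0 : ℝ), ∀ t : ℝ, T ≤ t →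
      (∫ ξ in {ξ : EuclideanSpace ℝ (Fin N) | 1 ≤ ‖ξ‖},
        ‖uhat0 (ft u₁) ξ t - F₃ (∫ x, u₁ x) ξ t‖ ^ 2)
      ≤ C * ((∫ ξ : EuclideanSpace ℝ (Fin N), ‖ft u₁ ξ‖ ^ 2) + ‖∫ x, u₁ x‖ ^ 2)
          * Real.exp (-η * t) :=
  stmt_16_general N u₁ hw₁
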